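/- arXiv:1807.04704 — 5 statements merged into one kernel-verified Lean document; each statement's English description precedes it below -/
import Mathlib

section
/- Let q ∈ Σ^A be interior and f_a : Σ^A → ℝ continuous selection functions. If q satisfies the evolutionary stability condition Σ_a q^a f_a(q') > Σ_a q'^a f_a(q') for all q' ≠ q in some neighbourhood of q, then the function V(q') := Σ_a q^a log(q^a/q'^a) is a strict local Lyapunov function for the replicator equation dq'^a/dt = q'^a (f_a(q') − Σ_b q'^b f_b(q')): V has an isolated local minimum at q, V(q) = 0, and the derivative of V along the replicator vector field is strictly negative on a punctured neighbourhood of q. -/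
/-- If an interior simplex point `q` satisfies the evolutionary stability condition on a punctured
neighbourhood, then `V(q') = ∑ a, q a * log (q a / q' a)` is a strict local Lyapunov function for
the replicator equation: `V q = 0`, `V` has an isolated local minimum at `q`, and the derivative
of `V` along the replicator vector field is strictly negative on a punctured neighbourhood. -/
theorem ess_gives_lyapunov {A : Type*} [Fintype A] (hA : 2 ≤ Fintype.card A)
    (q : A → ℝ) (hq : ∀ a, 0 < q a) (hqs : ∑ a, q a = 1)
    (f : A → (A → ℝ) → ℝ) (hf : ∀ a, Continuous (f a))
    (U : Set (A → ℝ)) (hU : U ∈ nhds q)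
    (hESS : ∀ q' ∈ U, (∀ a, 0 < q' a) → (∑ a, q' a = 1) → q' ≠ q →
      ∑ a, q' a * f a q' < ∑ a, q a * f a q') :
    (∑ a, q a * Real.log (q a / q a)) = 0 ∧
    ∃ W ∈ nhds q, ∀ q' ∈ W, (∀ a, 0 < q' a) → (∑ a, q' a = 1) → q' ≠ q →
      (0 < ∑ a, q a * Real.log (q a / q' a)) ∧
      -- derivative of V along the replicator field, via ∂V/∂q'^a = −q^a/q'^a:
      (∑ a, (-(q a / q' a)) * (q' a * (f a q' - ∑ b, q' b * f b q'))) < 0 := by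
  constructor
  · simp [div_self (hq _).ne']
  refine ⟨U, hU, fun q' hq'U hq'pos hq's hne => ?_⟩
  constructor
  · -- Gibbs inequality
    have key : ∑ a, q a * Real.log (q' a / q a) < 0 := by
      have hle : ∀ a : A, q a * Real.log (q' a / q a) ≤ q' a - q a := by
        intro a
        have h1 : Real.log (q' a / q a) ≤ q' a / q a - 1 :=
          Real.log_le_sub_one_of_pos (div_pos (hq'pos a) (hq a))
        calc q a * Real.log (q' a / q a) ≤ q a * (q' a / q a - 1) := by
              exact mul_le_mul_of_nonneg_left h1 (hq a).le
          _ = q' a - q a := by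
              rw [mul_sub, mul_div_cancel₀ _ (hq a).ne', mul_one]
      obtain ⟨a₀, ha₀⟩ := Function.ne_iff.mp hne
      have hlt : q a₀ * Real.log (q' a₀ / q a₀) < q' a₀ - q a₀ := by
        have h1 : Real.log (q' a₀ / q a₀) < q' a₀ / q a₀ - 1 :=
          Real.log_lt_sub_one_of_pos (div_pos (hq'pos a₀) (hq a₀))
            (fun h => ha₀ ((div_eq_one_iff_eq (hq a₀).ne').mp h))
        calc q a₀ * Real.log (q' a₀ / q a₀) < q a₀ * (q' a₀ / q a₀ - 1) :=
              (mul_lt_mul_iff_right₀ (hq a₀)).mpr h1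
          _ = q' a₀ - q a₀ := by
              rw [mul_sub, mul_div_cancel₀ _ (hq a₀).ne', mul_one]
      have := Finset.sum_lt_sum (fun a _ => hle a) ⟨a₀, Finset.mem_univ a₀, hlt⟩
      have hsum : ∑ a, (q' a - q a) = 0 := by
        rw [Finset.sum_sub_distrib, hqs, hq's, sub_self]
      linarith
    have : ∑ a, q a * Real.log (q a / q' a) = -∑ a, q a * Real.log (q' a / q a) := by
      rw [← Finset.sum_neg_distrib]
      refine Finset.sum_congr rfl fun a _ => ?_
      have : Real.log (q a / q' a) = -Real.log (q' a / q a) := by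
        rw [← Real.log_inv, inv_div]
      rw [this]; ring
    linarith [this ▸ neg_pos.mpr key]
  · have hsimp : ∀ a : A, (-(q a / q' a)) * (q' a * (f a q' - ∑ b, q' b * f b q'))
        = -(q a * (f a q' - ∑ b, q' b * f b q')) := by
      intro a
      have h : q a / q' a * q' a = q a := div_mul_cancel₀ _ (hq'pos a).ne'
      calc (-(q a / q' a)) * (q' a * (f a q' - ∑ b, q' b * f b q'))
          = -((q a / q' a * q' a) * (f a q' - ∑ b, q' b * f b q')) := by ring
        _ = -(q a * (f a q' - ∑ b, q' b * f b q')) := by rw [h]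
    rw [Finset.sum_congr rfl fun a _ => hsimp a]
    have hE := hESS q' hq'U hq'pos hq's hne
    have : ∑ a, -(q a * (f a q' - ∑ b, q' b * f b q'))
        = (∑ b, q' b * f b q') - ∑ a, q a * f a q' := by
      rw [Finset.sum_neg_distrib]
      rw [show ∀ x : ℝ, -x = -x from fun _ => rfl]
      have : ∑ a, q a * (f a q' - ∑ b, q' b * f b q')
          = (∑ a, q a * f a q') - (∑ a, q a) * ∑ b, q' b * f b q' := by
        rw [Finset.sum_mul]
        rw [← Finset.sum_sub_distrib]
        refine Finset.sum_congr rfl fun a _ => by ring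
      rw [this, hqs]; ring
    rw [this]; linarith
end

section
/- Every interior point q of the simplex satisfying the local evolutionary stability condition Σ_a q^a f_a(q') > Σ_a q'^a f_a(q') for all q' ≠ q near q is an asymptotically (Lyapunov) stable rest point of the replicator dynamics dq'^a/dt = q'^a (f_a(q') − Σ_b q'^b f_b(q')). -/
open Filter

/-- The open standard simplex over a finite alphabet. -/
def openSimplex (A : Type*) [Fintype A] : Set (A → ℝ) :=
  {p | (∀ a, 0 < p a) ∧ ∑ a, p a = 1}

/-- `c` is a solution of the replicator dynamics for selection functions `f`, staying in the
open simplex for all nonnegative times. -/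
def IsReplicatorSolution {A : Type*} [Fintype A]
    (f : A → (A → ℝ) → ℝ) (c : ℝ → A → ℝ) : Prop :=
  (∀ t : ℝ, 0 ≤ t → c t ∈ openSimplex A) ∧
  (∀ t : ℝ, 0 ≤ t → ∀ a,
    HasDerivAt (fun s => c s a)
      (c t a * (f a (c t) - ∑ b, c t b * f b (c t))) t)

/-!
The relative entropy `V p = ∑ a, q a * (log (q a) - log (p a))` is a strict Lyapunov function.
Along a replicator solution `d/dt V (c t) = -(∑ a, q a * f a (c t) - ∑ a, c t a * f a (c t))`,
which the evolutionary stability condition makes negative near `q`, while `V` is positive off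
`q` on the simplex (Gibbs' inequality). A solution starting where `V` is below its minimum over
a small sphere around `q` therefore never reaches that sphere, and once trapped in the ball the
advantage is bounded below by a positive constant as long as `V` stays above a given level,
so `V (c t) → 0`, which forces `c t → q`. That `q` is a rest point follows from the stability
condition at `q + ε (e_a - e_b)`, which gives `f a q ≤ f b q` as `ε → 0⁺`.
-/

open Set Metric Topology

section

variable {A : Type*} [Fintype A]

noncomputable def relEntropy (q p : A → ℝ) : ℝ :=
  ∑ a, q a * (Real.log (q a) - Real.log (p a))

/-- The evolutionary stability condition of `q` against `p` reads `0 < advantage q f p`. -/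
noncomputable def advantage (q : A → ℝ) (f : A → (A → ℝ) → ℝ) (p : A → ℝ) : ℝ :=
  ∑ a, q a * f a p - ∑ a, p a * f a p

@[simp]
lemma advantage_self (q : A → ℝ) (f : A → (A → ℝ) → ℝ) : advantage q f q = 0 :=
  sub_self _

lemma advantage_nonneg {q : A → ℝ} {f : A → (A → ℝ) → ℝ} {s : Set (A → ℝ)}
    (hW : ∀ p ∈ s, p ≠ q → 0 < advantage q f p) (p : A → ℝ) (hp : p ∈ s) :
    0 ≤ advantage q f p := by
  rcases eq_or_ne p q with rfl | hne
  · simp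
  · exact (hW p hp hne).le

lemma sub_lt_mul_sub_log {x y : ℝ} (hx : 0 < x) (hy : 0 < y) (hxy : x ≠ y) :
    x - y < x * (Real.log x - Real.log y) := by
  have h := Real.log_lt_sub_one_of_pos (div_pos hy hx)
    (by rwa [Ne, div_eq_one_iff_eq hx.ne', eq_comm])
  rw [Real.log_div hy.ne' hx.ne'] at h
  have := mul_lt_mul_of_pos_left h hx
  rw [mul_sub x (y / x) 1, mul_one, mul_div_cancel₀ _ hx.ne'] at this
  linarith

lemma sub_le_mul_sub_log {x y : ℝ} (hx : 0 < x) (hy : 0 < y) :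
    x - y ≤ x * (Real.log x - Real.log y) := by
  rcases eq_or_ne x y with rfl | hxy
  · simp
  · exact (sub_lt_mul_sub_log hx hy hxy).le

@[simp]
lemma relEntropy_self (q : A → ℝ) : relEntropy q q = 0 := by
  simp [relEntropy]

lemma relEntropy_pos {q p : A → ℝ} (hq : ∀ a, 0 < q a) (hp : ∀ a, 0 < p a)
    (hsum : ∑ a, p a = ∑ a, q a) (hne : p ≠ q) : 0 < relEntropy q p := by
  obtain ⟨a₀, ha₀⟩ := Function.ne_iff.1 hne
  have hlt : ∑ a, (q a - p a) < relEntropy q p :=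
    Finset.sum_lt_sum (fun a _ => sub_le_mul_sub_log (hq a) (hp a))
      ⟨a₀, Finset.mem_univ _, sub_lt_mul_sub_log (hq a₀) (hp a₀) (Ne.symm ha₀)⟩
  rwa [Finset.sum_sub_distrib, hsum, sub_self] at hlt

lemma relEntropy_nonneg {q p : A → ℝ} (hq : ∀ a, 0 < q a) (hp : ∀ a, 0 < p a)
    (hsum : ∑ a, p a = ∑ a, q a) : 0 ≤ relEntropy q p := by
  rcases eq_or_ne p q with rfl | hne
  · simp
  · exact (relEntropy_pos hq hp hsum hne).le

lemma isOpen_setOf_forall_pos : IsOpen {p : A → ℝ | ∀ a, 0 < p a} := by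
  simpa [Set.pi, Set.mem_Ioi] using isOpen_set_pi (s := fun _ : A => Ioi (0 : ℝ)) finite_univ
    fun _ _ => isOpen_Ioi

lemma continuousOn_relEntropy (q : A → ℝ) :
    ContinuousOn (relEntropy q) {p | ∀ a, 0 < p a} := by
  refine continuousOn_finsetSum _ fun a _ => continuousOn_const.mul
    (continuousOn_const.sub ((continuous_apply a).continuousOn.log fun p hp => (hp a).ne'))

lemma continuousOn_advantage (q : A → ℝ) {f : A → (A → ℝ) → ℝ}
    (hf : ∀ a, ContinuousOn (f a) (openSimplex A)) :
    ContinuousOn (advantage q f) (openSimplex A) :=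
  (continuousOn_finsetSum _ fun a _ => continuousOn_const.mul (hf a)).sub
    (continuousOn_finsetSum _ fun a _ => (continuous_apply a).continuousOn.mul (hf a))

lemma isClosed_setOf_sum_eq_one : IsClosed {p : A → ℝ | ∑ a, p a = 1} :=
  isClosed_eq (continuous_finsetSum _ fun a _ => continuous_apply a) continuous_const

lemma exists_pos_le_relEntropy {q : A → ℝ} (hq : q ∈ openSimplex A) {r ρ : ℝ}
    (hpos : closedBall q r ⊆ {p | ∀ a, 0 < p a}) (hρ : 0 < ρ) :
    ∃ m > 0, ∀ p ∈ closedBall q r, ∑ a, p a = 1 → ρ ≤ ‖p - q‖ → m ≤ relEntropy q p := by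
  have hK : IsCompact (closedBall q r ∩ {p | ∑ a, p a = 1} ∩ {p | ρ ≤ ‖p - q‖}) :=
    ((isCompact_closedBall q r).inter_right isClosed_setOf_sum_eq_one).inter_right
      (isClosed_le continuous_const (by fun_prop))
  obtain ⟨m, hm, hle⟩ := hK.exists_forall_le' ((continuousOn_relEntropy q).mono
    fun p hp => hpos hp.1.1) (a := 0) fun p ⟨⟨hpr, hp₁⟩, hρp⟩ =>
      relEntropy_pos hq.1 (hpos hpr) (hp₁.trans hq.2.symm) (by rintro rfl; simp at hρp; linarith)
  exact ⟨m, hm, fun p hpr hp₁ hρp => hle p ⟨⟨hpr, hp₁⟩, hρp⟩⟩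

lemma tendsto_of_tendsto_relEntropy_zero {ι : Type*} {l : Filter ι} {q : A → ℝ}
    (hq : q ∈ openSimplex A) {r : ℝ} (hpos : closedBall q r ⊆ {p | ∀ a, 0 < p a})
    {u : ι → A → ℝ} (hu : ∀ᶠ i in l, u i ∈ closedBall q r ∧ ∑ a, u i a = 1)
    (hV : Tendsto (fun i => relEntropy q (u i)) l (𝓝 0)) : Tendsto u l (𝓝 q) := by
  refine Metric.tendsto_nhds.2 fun ε hε => ?_
  obtain ⟨m, hm, hmle⟩ := exists_pos_le_relEntropy hq hpos hε
  filter_upwards [hu, hV.eventually (gt_mem_nhds hm)] with i ⟨hur, hu₁⟩ hVi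
  rw [dist_eq_norm]
  by_contra! h
  exact (hmle _ hur hu₁ h).not_gt hVi

lemma exists_first_hit {g : ℝ → ℝ} {a b r : ℝ} (hab : a ≤ b) (hg : ContinuousOn g (Icc a b))
    (ha : g a < r) (hb : r ≤ g b) :
    ∃ t ∈ Icc a b, g t = r ∧ ∀ s ∈ Icc a t, g s ≤ r := by
  have hhit : ∀ s ∈ Icc a b, r ≤ g s → ∃ t ∈ Icc a s, g t = r := fun s hs hrs =>
    intermediate_value_Icc hs.1 (hg.mono (Icc_subset_Icc_right hs.2)) ⟨ha.le, hrs⟩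
  have hS : IsCompact (Icc a b ∩ g ⁻¹' {r}) :=
    isCompact_Icc.of_isClosed_subset (hg.preimage_isClosed_of_isClosed isClosed_Icc
      isClosed_singleton) inter_subset_left
  obtain ⟨t₁, ht₁, hgt₁⟩ := hhit b ⟨hab, le_rfl⟩ hb
  obtain ⟨t, ⟨htab, hgt⟩, hleast⟩ := hS.exists_isLeast ⟨t₁, ht₁, hgt₁⟩
  refine ⟨t, htab, hgt, fun s hs => le_of_not_gt fun hrs => ?_⟩
  obtain ⟨u, hu, hgu⟩ := hhit s ⟨hs.1, hs.2.trans htab.2⟩ hrs.le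
  have htu : t ≤ u := hleast ⟨⟨hu.1, hu.2.trans (hs.2.trans htab.2)⟩, hgu⟩
  obtain rfl : s = t := le_antisymm hs.2 (htu.trans hu.2)
  exact hrs.ne' hgt

namespace IsReplicatorSolution

variable {f : A → (A → ℝ) → ℝ} {c : ℝ → A → ℝ} {q : A → ℝ} {r t : ℝ}

lemma continuousAt (hc : IsReplicatorSolution f c) (ht : 0 ≤ t) : ContinuousAt c t :=
  continuousAt_pi.2 fun a => (hc.2 t ht a).continuousAt

lemma hasDerivAt_relEntropy (hc : IsReplicatorSolution f c) (hq : ∑ a, q a = 1) (ht : 0 ≤ t) :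
    HasDerivAt (fun s => relEntropy q (c s)) (-advantage q f (c t)) t := by
  have hterm : ∀ a, HasDerivAt (fun s => q a * (Real.log (q a) - Real.log (c s a)))
      (q a * (∑ b, c t b * f b (c t) - f a (c t))) t := by
    intro a
    have hlog := (hc.2 t ht a).log ((hc.1 t ht).1 a).ne'
    rw [mul_div_cancel_left₀ _ ((hc.1 t ht).1 a).ne'] at hlog
    simpa using (hlog.const_sub (Real.log (q a))).const_mul (q a)
  refine (HasDerivAt.fun_sum fun a (_ : a ∈ Finset.univ) => hterm a).congr_deriv ?_
  simp only [advantage, mul_sub, Finset.sum_sub_distrib, ← Finset.sum_mul, hq, one_mul, neg_sub]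

lemma antitoneOn_relEntropy_add_mul (hc : IsReplicatorSolution f c) (hq : ∑ a, q a = 1)
    {κ : ℝ} {s : Set ℝ} (hs : Convex ℝ s) (hs₀ : s ⊆ Ici 0)
    (hκ : ∀ t ∈ s, κ ≤ advantage q f (c t)) :
    AntitoneOn (fun t => relEntropy q (c t) + κ * t) s := by
  have hd : ∀ t ∈ s, HasDerivAt (fun u => relEntropy q (c u) + κ * u)
      (-advantage q f (c t) + κ) t := fun t ht =>
    (hc.hasDerivAt_relEntropy hq (hs₀ ht)).add (by simpa using (hasDerivAt_id t).const_mul κ)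
  refine antitoneOn_of_hasDerivWithinAt_nonpos hs
    (fun t ht => (hd t ht).continuousAt.continuousWithinAt)
    (fun t ht => (hd t (interior_subset ht)).hasDerivWithinAt) fun t ht => ?_
  linarith [hκ t (interior_subset ht)]

lemma exists_relEntropy_lt (hq : ∑ a, q a = 1)
    (hf : ∀ a, ContinuousOn (f a) (openSimplex A)) (hpos : closedBall q r ⊆ {p | ∀ a, 0 < p a})
    (hW : ∀ p ∈ closedBall q r ∩ openSimplex A, p ≠ q → 0 < advantage q f p)
    (hc : IsReplicatorSolution f c) (htrap : ∀ t, 0 ≤ t → c t ∈ closedBall q r)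
    {η : ℝ} (hη : 0 < η) : ∃ t, 0 ≤ t ∧ relEntropy q (c t) < η := by
  by_contra! hη_le
  set K := closedBall q r ∩ {p | ∑ a, p a = 1}
  have hKS : K ⊆ openSimplex A := fun p hp => ⟨hpos hp.1, hp.2⟩
  have hC : IsCompact (K ∩ relEntropy q ⁻¹' Ici η) :=
    (isCompact_closedBall q r).of_isClosed_subset
      (((continuousOn_relEntropy q).mono fun p hp => hpos hp.1).preimage_isClosed_of_isClosed
        (isClosed_closedBall.inter isClosed_setOf_sum_eq_one) isClosed_Ici)
      fun p hp => hp.1.1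
  obtain ⟨κ, hκ, hκle⟩ := hC.exists_forall_le' ((continuousOn_advantage q hf).mono
    fun p hp => hKS hp.1) (a := 0) fun p ⟨hpK, hpη⟩ =>
      hW p ⟨hpK.1, hKS hpK⟩ (by rintro rfl; simp at hpη; linarith)
  -- the Lyapunov function decreases at rate at least `κ`, so it would turn negative
  set T := relEntropy q (c 0) / κ
  have hT : 0 ≤ T := div_nonneg (hη.le.trans (hη_le 0 le_rfl)) hκ.le
  have hdecr := hc.antitoneOn_relEntropy_add_mul hq (convex_Ici 0) subset_rfl
    (fun t ht => hκle (c t) ⟨⟨htrap t ht, (hc.1 t ht).2⟩, hη_le t ht⟩)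
    self_mem_Ici hT hT
  have hκT : κ * T = relEntropy q (c 0) := mul_div_cancel₀ _ hκ.ne'
  linarith [hη_le T hT]

lemma tendsto_relEntropy_atTop_zero (hq : q ∈ openSimplex A)
    (hf : ∀ a, ContinuousOn (f a) (openSimplex A)) (hpos : closedBall q r ⊆ {p | ∀ a, 0 < p a})
    (hW : ∀ p ∈ closedBall q r ∩ openSimplex A, p ≠ q → 0 < advantage q f p)
    (hc : IsReplicatorSolution f c) (htrap : ∀ t, 0 ≤ t → c t ∈ closedBall q r) :
    Tendsto (fun t => relEntropy q (c t)) atTop (𝓝 0) := by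
  have hanti := hc.antitoneOn_relEntropy_add_mul hq.2 (convex_Ici 0) subset_rfl (κ := 0)
    fun t ht => advantage_nonneg hW _ ⟨htrap t ht, hc.1 t ht⟩
  refine tendsto_order.2 ⟨fun a ha => eventually_atTop.2 ⟨0, fun t ht =>
    ha.trans_le (relEntropy_nonneg hq.1 (hc.1 t ht).1 ((hc.1 t ht).2.trans hq.2.symm))⟩,
    fun η hη => ?_⟩
  obtain ⟨t₀, ht₀, hlt⟩ := hc.exists_relEntropy_lt hq.2 hf hpos hW htrap hη
  exact eventually_atTop.2 ⟨t₀, fun t ht =>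
    (by simpa using hanti ht₀ (ht₀.trans ht) ht : relEntropy q (c t) ≤ _).trans_lt hlt⟩

end IsReplicatorSolution

lemma exists_forall_norm_sub_lt_of_advantage_nonneg {q : A → ℝ} (hq : q ∈ openSimplex A)
    {f : A → (A → ℝ) → ℝ} {r : ℝ} (hr : 0 < r) (hpos : closedBall q r ⊆ {p | ∀ a, 0 < p a})
    (hW : ∀ p ∈ closedBall q r ∩ openSimplex A, 0 ≤ advantage q f p) :
    ∃ δ > 0, ∀ c : ℝ → A → ℝ, IsReplicatorSolution f c → ‖c 0 - q‖ < δ →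
      ∀ t, 0 ≤ t → ‖c t - q‖ < r := by
  obtain ⟨m, hm, hmle⟩ := exists_pos_le_relEntropy hq hpos hr
  have hcont : ContinuousAt (relEntropy q) q :=
    (continuousOn_relEntropy q).continuousAt (isOpen_setOf_forall_pos.mem_nhds hq.1)
  obtain ⟨δ, hδ, hball⟩ := Metric.mem_nhds_iff.1
    (hcont.eventually (gt_mem_nhds (show relEntropy q q < m by simpa using hm)))
  refine ⟨min δ r, lt_min hδ hr, fun c hc h₀ t ht => ?_⟩
  by_contra! hrt
  obtain ⟨t₀, ⟨ht₀, -⟩, hhit, hbefore⟩ := exists_first_hit ht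
    (fun s hs => ((hc.continuousAt hs.1).sub continuousAt_const).norm.continuousWithinAt)
    (h₀.trans_le (min_le_right _ _)) hrt
  have hdecr := hc.antitoneOn_relEntropy_add_mul hq.2 (convex_Icc 0 t₀) (fun s hs => hs.1)
    (κ := 0) (fun s hs => hW (c s) ⟨mem_closedBall_iff_norm.2 (hbefore s hs), hc.1 s hs.1⟩)
    (left_mem_Icc.2 ht₀) (right_mem_Icc.2 ht₀) ht₀
  have hlow : m ≤ relEntropy q (c t₀) :=
    hmle _ (mem_closedBall_iff_norm.2 hhit.le) (hc.1 t₀ ht₀).2 hhit.ge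
  have hup : relEntropy q (c 0) < m := hball (mem_ball_iff_norm.2 (h₀.trans_le (min_le_left _ _)))
  simp only [zero_mul, add_zero] at hdecr
  linarith

lemma apply_le_apply_of_advantage_nonneg {q : A → ℝ} (hq : q ∈ openSimplex A)
    {f : A → (A → ℝ) → ℝ} (hf : ∀ a, ContinuousWithinAt (f a) (openSimplex A) q)
    (hW : ∀ᶠ p in 𝓝[openSimplex A] q, 0 ≤ advantage q f p) (a b : A) : f a q ≤ f b q := by
  classical
  let p : ℝ → A → ℝ := fun ε => q + ε • (Pi.single a 1 - Pi.single b 1)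
  have hp_sum : ∀ ε, ∑ x, p ε x = 1 := by
    simp [p, Finset.sum_add_distrib, ← Finset.mul_sum, hq.2]
  have hp_adv : ∀ ε, advantage q f (p ε) = ε * (f b (p ε) - f a (p ε)) := by
    intro ε
    simp [advantage, p, add_mul, Finset.sum_add_distrib, mul_sub, sub_mul, Finset.sum_sub_distrib,
      Pi.single_apply]
  have hp : Tendsto p (𝓝 0) (𝓝 q) := by
    have : Continuous p := by fun_prop
    exact this.tendsto' 0 q (by simp [p])
  have hp_tendsto : Tendsto p (𝓝[>] 0) (𝓝[openSimplex A] q) := by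
    refine tendsto_nhdsWithin_iff.2 ⟨hp.mono_left nhdsWithin_le_nhds, ?_⟩
    filter_upwards [hp.mono_left nhdsWithin_le_nhds (isOpen_setOf_forall_pos.mem_nhds hq.1)]
      with ε hε using ⟨hε, hp_sum ε⟩
  have hle : ∀ᶠ ε in 𝓝[>] 0, f a (p ε) ≤ f b (p ε) := by
    filter_upwards [hp_tendsto.eventually hW, self_mem_nhdsWithin] with ε hε (hε₀ : 0 < ε)
    rw [hp_adv] at hε
    exact sub_nonneg.1 ((mul_nonneg_iff_of_pos_left hε₀).1 hε)
  exact le_of_tendsto_of_tendsto ((hf a).tendsto.comp hp_tendsto) ((hf b).tendsto.comp hp_tendsto)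
    hle

lemma replicator_rest_point_of_advantage_nonneg {q : A → ℝ} (hq : q ∈ openSimplex A)
    {f : A → (A → ℝ) → ℝ} (hf : ∀ a, ContinuousWithinAt (f a) (openSimplex A) q)
    (hW : ∀ᶠ p in 𝓝[openSimplex A] q, 0 ≤ advantage q f p) (a : A) :
    q a * (f a q - ∑ b, q b * f b q) = 0 := by
  have heq : ∀ b, f b q = f a q := fun b =>
    le_antisymm (apply_le_apply_of_advantage_nonneg hq hf hW b a)
      (apply_le_apply_of_advantage_nonneg hq hf hW a b)
  simp [heq, ← Finset.sum_mul, hq.2]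

end

/-- Every interior simplex point satisfying the local evolutionary stability condition is an
asymptotically (Lyapunov) stable rest point of the replicator dynamics. -/
theorem ess_implies_asymptotically_stable {A : Type*} [Fintype A]
    (q : A → ℝ) (hq : q ∈ openSimplex A)
    (f : A → (A → ℝ) → ℝ) (hf : ∀ a, ContDiffOn ℝ 1 (f a) (openSimplex A))
    (U : Set (A → ℝ)) (hU : U ∈ nhds q)
    (hESS : ∀ q' ∈ U ∩ openSimplex A, q' ≠ q →
      ∑ a, q' a * f a q' < ∑ a, q a * f a q') :
    -- q is a rest point:
    (∀ a, q a * (f a q - ∑ b, q b * f b q) = 0) ∧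
    -- Lyapunov stability:
    (∀ ε > 0, ∃ δ > 0, ∀ c : ℝ → A → ℝ, IsReplicatorSolution f c →
      ‖c 0 - q‖ < δ → ∀ t : ℝ, 0 ≤ t → ‖c t - q‖ < ε) ∧
    -- local attraction:
    (∃ δ₀ > 0, ∀ c : ℝ → A → ℝ, IsReplicatorSolution f c →
      ‖c 0 - q‖ < δ₀ → Tendsto (fun t => c t) atTop (nhds q)) := by
  have hfc : ∀ a, ContinuousOn (f a) (openSimplex A) := fun a => (hf a).continuousOn
  have hW : ∀ p ∈ U ∩ openSimplex A, p ≠ q → 0 < advantage q f p :=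
    fun p hp hne => sub_pos.2 (hESS p hp hne)
  obtain ⟨r, hr, hrU⟩ : ∃ r > 0, closedBall q r ⊆ U ∩ {p | ∀ a, 0 < p a} :=
    nhds_basis_closedBall.mem_iff.1 (inter_mem hU (isOpen_setOf_forall_pos.mem_nhds hq.1))
  have hpos : closedBall q r ⊆ {p | ∀ a, 0 < p a} := hrU.trans inter_subset_right
  have hWr : ∀ p ∈ closedBall q r ∩ openSimplex A, p ≠ q → 0 < advantage q f p :=
    fun p hp => hW p ⟨(hrU hp.1).1, hp.2⟩
  obtain ⟨δ₀, hδ₀, htrap⟩ :=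
    exists_forall_norm_sub_lt_of_advantage_nonneg hq hr hpos (advantage_nonneg hWr)
  refine ⟨replicator_rest_point_of_advantage_nonneg hq (fun a => hfc a q hq)
      (mem_of_superset (inter_mem_nhdsWithin _ hU) fun p hp => advantage_nonneg hW p ⟨hp.2, hp.1⟩),
    fun ε hε => ?_, δ₀, hδ₀, fun c hc h₀ => ?_⟩
  · have hsub : closedBall q (min ε r) ⊆ closedBall q r :=
      closedBall_subset_closedBall (min_le_right _ _)
    obtain ⟨δ, hδ, hstable⟩ := exists_forall_norm_sub_lt_of_advantage_nonneg hq (lt_min hε hr)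
      (hsub.trans hpos) fun p hp => advantage_nonneg hWr p ⟨hsub hp.1, hp.2⟩
    exact ⟨δ, hδ, fun c hc h₀ t ht => (hstable c hc h₀ t ht).trans_le (min_le_left _ _)⟩
  · have hball : ∀ t, 0 ≤ t → c t ∈ closedBall q r :=
      fun t ht => mem_closedBall_iff_norm.2 (htrap c hc h₀ t ht).le
    exact tendsto_of_tendsto_relEntropy_zero hq hpos
      (eventually_atTop.2 ⟨0, fun t ht => ⟨hball t ht, (hc.1 t ht).2⟩⟩)
      (hc.tendsto_relEntropy_atTop_zero hq hfc hpos hWr hball)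
end

section
/- Let Q be an irreducible row-stochastic matrix indexed by a finite set I. Then the unique stationary probability vector π (satisfying π Q = π, Σ_j π_j = 1, π_j > 0) is given by π_j = [1 − Q]_{jj} / Σ_k [1 − Q]_{kk}, where [1 − Q]_{jj} denotes the j-th principal minor of the matrix I − Q (the determinant of I − Q with row and column j deleted). -/
open Matrix Finset


theorem det_of_row_single {I : Type*} [Fintype I] [DecidableEq I] (B : Matrix I I ℝ) (j : I)
    (hB : ∀ k, B j k = if k = j then 1 else 0) :
    B.det = Matrix.det (B.submatrix (fun i : {k : I // k ≠ j} => (i : I))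
      (fun i : {k : I // k ≠ j} => (i : I))) := by
  classical
  let e : {a : I // a = j} ⊕ {a : I // ¬ a = j} ≃ I := Equiv.sumCompl (· = j)
  rw [← Matrix.det_submatrix_equiv_self e B]
  set C := B.submatrix e e with hC
  rw [← Matrix.fromBlocks_toBlocks C]
  have h12 : C.toBlocks₁₂ = 0 := by
    ext i k
    have : B j (k : I) = 0 := by rw [hB]; simp [k.2]
    simpa [Matrix.toBlocks₁₂, C, e, Equiv.sumCompl_apply_inl, Equiv.sumCompl_apply_inr, i.2] using this
  rw [h12, Matrix.det_fromBlocks_zero₁₂]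
  haveI : Unique {a : I // a = j} := ⟨⟨⟨j, rfl⟩⟩, fun a => Subtype.ext a.2⟩
  have h11 : C.toBlocks₁₁.det = 1 := by
    rw [Matrix.det_unique]
    have : B j j = 1 := by rw [hB]; simp
    simpa [Matrix.toBlocks₁₁, C, e, Equiv.sumCompl_apply_inl, (default : {a : I // a = j}).2] using this
  rw [h11, one_mul]
  rfl

theorem kernel_const {I : Type*} [Fintype I] [DecidableEq I] [Nonempty I]
    (Q : Matrix I I ℝ) (hnn : ∀ j k, 0 ≤ Q j k) (hrow : ∀ j, ∑ k, Q j k = 1)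
    (hconn : ∀ j k : I, Relation.ReflTransGen (fun u v : I => 0 < Q u v) j k)
    (x : I → ℝ) (hx : Q.mulVec x = x) : ∀ j k, x j = x k := by
  classical
  obtain ⟨j0, -, hj0⟩ := Finset.exists_max_image Finset.univ x ⟨Classical.arbitrary I, Finset.mem_univ _⟩
  have hmax : ∀ u, x u ≤ x j0 := fun u => hj0 u (Finset.mem_univ u)
  -- step lemma
  have step : ∀ b k, x b = x j0 → 0 < Q b k → x k = x j0 := by
    intro b k hb hQ
    by_contra hne
    have hk : x k < x j0 := lt_of_le_of_ne (hmax k) hne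
    have hlt : ∑ u, Q b u * x u < ∑ u, Q b u * x j0 := by
      apply Finset.sum_lt_sum
      · intro u _
        exact mul_le_mul_of_nonneg_left (hmax u) (hnn b u)
      · exact ⟨k, Finset.mem_univ k, by nlinarith⟩
    have hxb : x b = ∑ u, Q b u * x u := by
      have := congrFun hx b
      simpa [Matrix.mulVec, dotProduct] using this.symm
    rw [← hxb, ← Finset.sum_mul, hrow, one_mul, hb] at hlt
    exact lt_irrefl _ hlt
  have hall : ∀ k, x k = x j0 := by
    intro k
    have h := hconn j0 k
    induction h with
    | refl => rfl
    | tail _ hbk ih => exact step _ _ ih hbk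
  intro j k; rw [hall j, hall k]

theorem minor_pos {I : Type*} [Fintype I] [DecidableEq I] [Nonempty I]
    (Q : Matrix I I ℝ) (hnn : ∀ j k, 0 ≤ Q j k) (hrow : ∀ j, ∑ k, Q j k = 1)
    (hconn : ∀ j k : I, Relation.ReflTransGen (fun u v : I => 0 < Q u v) j k) (j : I) :
    0 < Matrix.det ((1 - Q).submatrix (fun i : {k : I // k ≠ j} => (i : I))
      (fun i : {k : I // k ≠ j} => (i : I))) := by
  classical
  set S := {k : I // k ≠ j}
  set R : Matrix S S ℝ := Q.submatrix (fun i : S => (i : I)) (fun i : S => (i : I)) with hR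
  have hsubm : (1 - Q).submatrix (fun i : S => (i : I)) (fun i : S => (i : I)) = 1 - R := by
    ext a b
    simp [Matrix.one_apply, Matrix.sub_apply, R, Subtype.val_inj]
  rw [hsubm]
  -- row sums of R
  have hsub : ∀ c : I, ∑ k : S, Q c (k : I) = 1 - Q c j := by
    intro c
    have h1 : ∑ k ∈ Finset.univ.erase j, Q c k = ∑ k : S, Q c (k : I) :=
      Finset.sum_subtype (Finset.univ.erase j) (fun x => by simp) (fun k => Q c k)
    have h2 := hrow c
    rw [← Finset.add_sum_erase _ _ (Finset.mem_univ j)] at h2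
    rw [← h1]; linarith
  -- kernel triviality
  have hker : ∀ t : ℝ, 0 ≤ t → t ≤ 1 → ∀ x : S → ℝ, (1 - t • R).mulVec x = 0 → x = 0 := by
    intro t ht0 ht1 x hx
    by_contra hx0
    obtain ⟨i1, hi1⟩ := Function.ne_iff.mp hx0
    have hSne : (Finset.univ : Finset S).Nonempty := ⟨i1, Finset.mem_univ _⟩
    obtain ⟨i0, -, hi0⟩ := Finset.exists_max_image Finset.univ (fun i => |x i|) hSne
    set M := |x i0| with hMdef
    have hmax : ∀ u : S, |x u| ≤ M := fun u => hi0 u (Finset.mem_univ u)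
    have hM : 0 < M := lt_of_lt_of_le (abs_pos.mpr hi1) (hmax i1)
    -- fixed point equation
    have hfix : ∀ c : S, x c = t * ∑ k : S, Q (c : I) (k : I) * x k := by
      intro c
      have := congrFun hx c
      simp only [Matrix.sub_mulVec, Matrix.one_mulVec, Pi.sub_apply, Pi.zero_apply,
        Matrix.smul_mulVec, Pi.smul_apply, smul_eq_mul] at this
      have h2 : (R.mulVec x) c = ∑ k : S, Q (c : I) (k : I) * x k := by
        simp [Matrix.mulVec, dotProduct, R]
      linarith [this, h2 ▸ this]
    -- key inequality at a max node
    have key : ∀ c : S, |x c| = M → M ≤ ∑ k : S, Q (c : I) (k : I) * |x k| := by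
      intro c hc
      have h1 : |x c| ≤ t * |∑ k : S, Q (c : I) (k : I) * x k| := by
        rw [hfix c, abs_mul, abs_of_nonneg ht0]
      have h2 : |∑ k : S, Q (c : I) (k : I) * x k| ≤ ∑ k : S, Q (c : I) (k : I) * |x k| := by
        refine (Finset.abs_sum_le_sum_abs _ _).trans ?_
        apply Finset.sum_le_sum
        intro u _
        rw [abs_mul, abs_of_nonneg (hnn _ _)]
      have h3 : (0:ℝ) ≤ ∑ k : S, Q (c : I) (k : I) * |x k| :=
        Finset.sum_nonneg fun u _ => mul_nonneg (hnn _ _) (abs_nonneg _)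
      nlinarith [hc]
    have bound : ∀ c : S, ∑ k : S, Q (c : I) (k : I) * |x k| ≤ (1 - Q (c : I) j) * M := by
      intro c
      calc ∑ k : S, Q (c : I) (k : I) * |x k| ≤ ∑ k : S, Q (c : I) (k : I) * M :=
            Finset.sum_le_sum fun u _ => mul_le_mul_of_nonneg_left (hmax u) (hnn _ _)
        _ = (1 - Q (c : I) j) * M := by rw [← Finset.sum_mul, hsub]
    -- F1 : max node cannot step to j
    have F1 : ∀ c : S, |x c| = M → ¬ (0 < Q (c : I) j) := by
      intro c hc hQ
      have := key c hc
      have := bound c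
      nlinarith [hnn (c : I) j]
    -- F2 : neighbors of max node are max
    have F2 : ∀ c : S, |x c| = M → ∀ b : S, 0 < Q (c : I) (b : I) → |x b| = M := by
      intro c hc b hQ
      by_contra hne
      have hb : |x b| < M := lt_of_le_of_ne (hmax b) hne
      have hlt : ∑ k : S, Q (c : I) (k : I) * |x k| < ∑ k : S, Q (c : I) (k : I) * M := by
        apply Finset.sum_lt_sum
        · intro u _; exact mul_le_mul_of_nonneg_left (hmax u) (hnn _ _)
        · exact ⟨b, Finset.mem_univ b, by nlinarith⟩
      rw [← Finset.sum_mul, hsub] at hlt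
      have := key c hc
      nlinarith [hnn (c : I) j]
    -- path from i0 to j yields contradiction
    have claim : ∀ c : I, Relation.ReflTransGen (fun u v : I => 0 < Q u v) c j →
        ∀ hc : c ≠ j, |x ⟨c, hc⟩| ≠ M := by
      intro c hpath
      induction hpath using Relation.ReflTransGen.head_induction_on with
      | refl => intro hc _; exact hc rfl
      | head h' hp ih =>
        rename_i a b
        intro ha hxa
        by_cases hb : b = j
        · exact F1 ⟨a, ha⟩ hxa (hb ▸ h')
        · exact ih hb (F2 ⟨a, ha⟩ hxa ⟨b, hb⟩ h')
    exact claim (i0 : I) (hconn (i0 : I) j) i0.2 (by simpa using hMdef.symm)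
  -- determinant nonzero on [0,1]
  have hdet : ∀ t : ℝ, 0 ≤ t → t ≤ 1 → Matrix.det (1 - t • R) ≠ 0 := by
    intro t ht0 ht1 h0
    obtain ⟨v, hv, hv0⟩ := (Matrix.exists_mulVec_eq_zero_iff).mpr h0
    exact hv (hker t ht0 ht1 v hv0)
  -- IVT
  have hcont : Continuous fun t : ℝ => Matrix.det (1 - t • R) := by
    apply Continuous.matrix_det
    exact continuous_const.sub (continuous_id.smul continuous_const)
  have hg0 : Matrix.det (1 - (0:ℝ) • R) = 1 := by simp
  rcases lt_trichotomy (Matrix.det (1 - R)) 0 with h | h | h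
  · exfalso
    have hmem : (0:ℝ) ∈ Set.Icc (Matrix.det (1 - (1:ℝ) • R)) (Matrix.det (1 - (0:ℝ) • R)) := by
      constructor
      · simpa using h.le
      · rw [hg0]; norm_num
    obtain ⟨t, ht, hgt⟩ := intermediate_value_Icc' (by norm_num : (0:ℝ) ≤ 1) hcont.continuousOn hmem
    exact hdet t ht.1 ht.2 hgt
  · exact absurd (by simpa using h) (hdet 1 (by norm_num) le_rfl)
  · simpa using h
/-- The stationary probability vector of an irreducible row-stochastic matrix is given by the
normalized principal minors of `1 - Q`, it is positive, and it is unique. -/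
theorem stationary_vector_principal_minors
    {I : Type*} [Fintype I] [DecidableEq I] [Nonempty I]
    (Q : Matrix I I ℝ) (hnn : ∀ j k, 0 ≤ Q j k) (hrow : ∀ j, ∑ k, Q j k = 1)
    (hconn : ∀ j k : I,
      Relation.ReflTransGen (fun u v : I => 0 < Q u v) j k) :
    ∀ minor : I → ℝ,
      (minor = fun j =>
        Matrix.det ((1 - Q).submatrix
          (fun i : {k : I // k ≠ j} => (i : I)) (fun i : {k : I // k ≠ j} => (i : I)))) →
    ∀ π : I → ℝ, (π = fun j => minor j / ∑ k, minor k) →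
      ((∑ j, π j = 1) ∧ (∀ j, 0 < π j) ∧ (∀ k, ∑ j, π j * Q j k = π k) ∧
        ∀ p : I → ℝ, (∑ j, p j = 1) → (∀ j, 0 < p j) →
          (∀ k, ∑ j, p j * Q j k = p k) → p = π) := by
  classical
  intro minor hminor π hπ
  set A : Matrix I I ℝ := 1 - Q with hA
  -- minor j is the diagonal adjugate entry
  have hadj : ∀ j, A.adjugate j j = minor j := by
    intro j
    rw [hminor, Matrix.adjugate_apply]
    rw [det_of_row_single (A.updateRow j (Pi.single j 1)) j
      (fun k => by simp [Matrix.updateRow_self, Pi.single_apply])]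
    congr 1
    ext i k
    simp [Matrix.submatrix_apply, Matrix.updateRow_apply, i.2]
  -- determinant of A vanishes
  have hdetA : A.det = 0 := by
    rw [← Matrix.exists_mulVec_eq_zero_iff]
    refine ⟨fun _ => 1, Function.ne_iff.mpr ⟨Classical.arbitrary I, one_ne_zero⟩, ?_⟩
    funext i
    rw [Matrix.sub_mulVec, Matrix.one_mulVec]
    simp [Matrix.mulVec, dotProduct, hrow i]
  -- A-kernel vectors are Q-fixed vectors
  have hAQ : ∀ v : I → ℝ, A.mulVec v = 0 → Q.mulVec v = v := by
    intro v hv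
    have : A.mulVec v = v - Q.mulVec v := by
      rw [hA, Matrix.sub_mulVec, Matrix.one_mulVec]
    rw [this] at hv
    funext i
    have := congrFun hv i
    simp only [Pi.sub_apply, Pi.zero_apply, sub_eq_zero] at this
    exact this.symm
  -- columns of the adjugate are constant
  have hcol : ∀ i k, A.adjugate i k = minor k := by
    intro i k
    have hv : A.mulVec (fun i => A.adjugate i k) = 0 := by
      ext i'
      have h := congrFun (congrFun (Matrix.mul_adjugate A) i') k
      rw [hdetA, zero_smul] at h
      simpa [Matrix.mul_apply, Matrix.mulVec, dotProduct] using h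
    have := kernel_const Q hnn hrow hconn _ (hAQ _ hv) i k
    rw [this, hadj]
  -- the minors form a stationary vector
  have hstat : ∀ k, ∑ i, minor i * Q i k = minor k := by
    intro k
    have h := congrFun (congrFun (Matrix.adjugate_mul A) k) k
    rw [hdetA, zero_smul] at h
    simp only [Matrix.mul_apply, Matrix.zero_apply] at h
    have h2 : ∑ i, minor i * A i k = 0 := by
      rw [← h]
      exact Finset.sum_congr rfl fun i _ => by rw [hcol k i]
    have h3 : ∑ i, minor i * A i k = minor k - ∑ i, minor i * Q i k := by
      simp only [hA, Matrix.sub_apply, Matrix.one_apply, mul_sub, mul_ite, mul_one, mul_zero]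
      rw [Finset.sum_sub_distrib, Finset.sum_ite_eq' Finset.univ k minor]
      simp
    rw [h3] at h2
    linarith
  -- positivity of the minors
  have hpos : ∀ j, 0 < minor j := by
    intro j
    rw [hminor]
    exact minor_pos Q hnn hrow hconn j
  have hSpos : 0 < ∑ k, minor k := Finset.sum_pos (fun k _ => hpos k) Finset.univ_nonempty
  -- properties of π
  have hπsum : ∑ j, π j = 1 := by
    rw [hπ, ← Finset.sum_div, div_self (ne_of_gt hSpos)]
  have hπpos : ∀ j, 0 < π j := fun j => by rw [hπ]; exact div_pos (hpos j) hSpos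
  have hπstat : ∀ k, ∑ j, π j * Q j k = π k := by
    intro k
    rw [hπ]
    simp only [div_mul_eq_mul_div]
    rw [← Finset.sum_div, hstat]
  refine ⟨hπsum, hπpos, hπstat, ?_⟩
  -- uniqueness
  intro p hpsum hppos hpstat
  obtain ⟨j0, -, hj0⟩ := Finset.exists_min_image Finset.univ (fun j => p j / π j)
    ⟨Classical.arbitrary I, Finset.mem_univ _⟩
  set d : I → ℝ := fun j => p j * π j0 - p j0 * π j with hd
  have hdnn : ∀ j, 0 ≤ d j := by
    intro jj
    have h1 : p j0 / π j0 ≤ p jj / π jj := hj0 jj (Finset.mem_univ jj)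
    have h2 : p j0 * π jj ≤ p jj * π j0 := (div_le_div_iff₀ (hπpos j0) (hπpos jj)).mp h1
    simp only [hd]
    linarith
  have hdstat : ∀ k, ∑ i, d i * Q i k = d k := by
    intro k
    have h1 : ∑ i, d i * Q i k
        = (∑ i, p i * Q i k) * π j0 - p j0 * ∑ i, π i * Q i k := by
      rw [Finset.sum_mul, Finset.mul_sum, ← Finset.sum_sub_distrib]
      exact Finset.sum_congr rfl fun i _ => by simp only [hd]; ring
    rw [h1, hpstat k, hπstat k]
  have hdj0 : d j0 = 0 := by simp only [hd]; ring
  have hback : ∀ i k : I, 0 < Q i k → d k = 0 → d i = 0 := by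
    intro i k hQ hdk
    have h0 : ∑ u, d u * Q u k = 0 := by rw [hdstat k, hdk]
    have h1 := (Finset.sum_eq_zero_iff_of_nonneg
      (fun u _ => mul_nonneg (hdnn u) (hnn u k))).mp h0 i (Finset.mem_univ i)
    exact (mul_eq_zero.mp h1).resolve_right (ne_of_gt hQ)
  have hdzero : ∀ i, d i = 0 := by
    intro i
    have claim : ∀ c : I, Relation.ReflTransGen (fun u v : I => 0 < Q u v) c j0 → d c = 0 := by
      intro c hpath
      induction hpath using Relation.ReflTransGen.head_induction_on with
      | refl => exact hdj0
      | head h' hp ih => exact hback _ _ h' ih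
    exact claim i (hconn i j0)
  have hpj0 : π j0 = p j0 := by
    have h1 : ∑ j, p j * π j0 = ∑ j, p j0 * π j := by
      exact Finset.sum_congr rfl fun jj _ => by have := hdzero jj; simp only [hd] at this; linarith
    rw [← Finset.sum_mul, hpsum, one_mul, ← Finset.mul_sum, hπsum, mul_one] at h1
    exact h1
  funext jj
  have := hdzero jj
  simp only [hd, hpj0] at this
  have hne : p j0 ≠ 0 := ne_of_gt (hppos j0)
  have h2 : p j0 * (p jj - π jj) = 0 := by linear_combination this
  have h3 := (mul_eq_zero.mp h2).resolve_left hne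
  linarith
end

section
/- Consider the equivalence relation on the set of states I of a finite unifilar labelled transition system (deterministic transition function γ plus positive transition probabilities q) given by predictive equivalence of output-processes. Then the subset D_γ(σ) of parameter points whose predictive-equivalence partition refines below σ is exactly the semi-affine subspace cut out by the equations q^{j,a} = q^{k,a} for all a and all j, k in the same block of σ, and the assignment σ ↦ D_γ(σ) is an isomorphism from the lattice of achievable partitions (ordered by reverse refinement) onto the lattice of these subspaces ordered by reverse inclusion; in particular D_γ(σ ∨ σ') = D_γ(σ) ∩ D_γ(σ'). -/
/-- Probability of emitting the word `w` starting from state `j` in a unifilar labelled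
transition system. -/
def wordProb {I A : Type*} (γ : I → A → Option I) (q : I → A → ℝ) :
    List A → I → ℝ
  | [], _ => 1
  | a :: w, j =>
    match γ j a with
    | none => 0
    | some k => q j a * wordProb γ q w k

/-- A parameter point for the unifilar transition structure `γ`: positive probabilities on the
defined transitions, zero elsewhere, summing to one at each state. -/
def IsParam {I A : Type*} [Fintype A] (γ : I → A → Option I) (q : I → A → ℝ) : Prop :=
  (∀ j a, γ j a ≠ none → 0 < q j a) ∧
  (∀ j a, γ j a = none → q j a = 0) ∧
  (∀ j, ∑ a, q j a = 1)

/-- The predictive-equivalence setoid of a parameter point: two states are equivalent iff they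
assign the same probability to every finite output word. -/
def predSetoid {I A : Type*} (γ : I → A → Option I) (q : I → A → ℝ) : Setoid I :=
  ⟨fun j k => ∀ w : List A, wordProb γ q w j = wordProb γ q w k,
    ⟨fun _ _ => rfl, fun h w => (h w).symm, fun h₁ h₂ w => (h₁ w).trans (h₂ w)⟩⟩

/-- The degenerate stratum `D_γ(σ)`: parameter points whose predictive-equivalence partition is
at least as coarse as `σ`. -/
def Dstratum {I A : Type*} [Fintype A] (γ : I → A → Option I) (σ : Setoid I) :
    Set (I → A → ℝ) :=
  {q | IsParam γ q ∧ σ ≤ predSetoid γ q}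

/-- `σ` is an achievable partition: it is the predictive-equivalence partition of some
parameter point. -/
def Achievable {I A : Type*} [Fintype A] (γ : I → A → Option I) (σ : Setoid I) : Prop :=
  ∃ q : I → A → ℝ, IsParam γ q ∧ predSetoid γ q = σ

lemma wordProb_single {I A : Type*} (γ : I → A → Option I) (q : I → A → ℝ)
    (h0 : ∀ j a, γ j a = none → q j a = 0) (j : I) (a : A) :
    wordProb γ q [a] j = q j a := by
  show (match γ j a with | none => 0 | some k => q j a * wordProb γ q [] k) = q j a
  cases h : γ j a with
  | none => simp [h0 j a h]
  | some k => show q j a * wordProb γ q [] k = q j a; simp [wordProb]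

lemma bisim_step {I A : Type*} [Fintype A] {γ : I → A → Option I} {q₀ : I → A → ℝ}
    (hp : IsParam γ q₀) {j k : I}
    (h : ∀ w : List A, wordProb γ q₀ w j = wordProb γ q₀ w k) (a : A) :
    (γ j a = none ∧ γ k a = none) ∨
      ∃ j' k', γ j a = some j' ∧ γ k a = some k' ∧
        (∀ w : List A, wordProb γ q₀ w j' = wordProb γ q₀ w k') := by
  obtain ⟨hpos, h0, -⟩ := hp
  have hqa : q₀ j a = q₀ k a := by
    have := h [a]
    rwa [wordProb_single γ q₀ h0, wordProb_single γ q₀ h0] at this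
  cases hj : γ j a with
  | none =>
    cases hk : γ k a with
    | none => exact Or.inl ⟨rfl, rfl⟩
    | some k' =>
      exfalso
      have hkpos : 0 < q₀ k a := hpos k a (by simp [hk])
      have : q₀ j a = 0 := h0 j a hj
      linarith [hqa]
  | some j' =>
    cases hk : γ k a with
    | none =>
      exfalso
      have hjpos : 0 < q₀ j a := hpos j a (by simp [hj])
      have : q₀ k a = 0 := h0 k a hk
      linarith [hqa]
    | some k' =>
      refine Or.inr ⟨j', k', rfl, rfl, fun w => ?_⟩
      have hjpos : 0 < q₀ j a := hpos j a (by simp [hj])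
      have haw := h (a :: w)
      have e1 : wordProb γ q₀ (a :: w) j = q₀ j a * wordProb γ q₀ w j' := by
        show (match γ j a with | none => 0 | some m => q₀ j a * wordProb γ q₀ w m) = _
        rw [hj]
      have e2 : wordProb γ q₀ (a :: w) k = q₀ k a * wordProb γ q₀ w k' := by
        show (match γ k a with | none => 0 | some m => q₀ k a * wordProb γ q₀ w m) = _
        rw [hk]
      rw [e1, e2, ← hqa] at haw
      exact mul_left_cancel₀ (ne_of_gt hjpos) haw

/-- If `σ` is a bisimulation for `γ` (in the sense below) and `q` is constant on σ-classes,
then σ-related states are predictively equivalent under `q`. -/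
lemma pred_of_bisim {I A : Type*} {γ : I → A → Option I} {σ : Setoid I} {q : I → A → ℝ}
    (hbis : ∀ j k, σ j k → ∀ a : A,
      (γ j a = none ∧ γ k a = none) ∨
        ∃ j' k', γ j a = some j' ∧ γ k a = some k' ∧ σ j' k')
    (heq : ∀ j k, σ j k → ∀ a : A, q j a = q k a) :
    ∀ (w : List A) (j k : I), σ j k → wordProb γ q w j = wordProb γ q w k := by
  intro w
  induction w with
  | nil => intro j k _; rfl
  | cons a w ih =>
    intro j k hjk
    rcases hbis j k hjk a with ⟨hj, hk⟩ | ⟨j', k', hj, hk, hjk'⟩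
    · show (match γ j a with | none => 0 | some m => q j a * wordProb γ q w m)
        = (match γ k a with | none => 0 | some m => q k a * wordProb γ q w m)
      rw [hj, hk]
    · show (match γ j a with | none => 0 | some m => q j a * wordProb γ q w m)
        = (match γ k a with | none => 0 | some m => q k a * wordProb γ q w m)
      rw [hj, hk, heq j k hjk a]
      show q k a * wordProb γ q w j' = q k a * wordProb γ q w k'
      rw [ih j' k' hjk']

/-- Proposition 3.3: `D_γ(σ)` is the semi-affine subspace cut out by the equations
`q^{j,a} = q^{k,a}` for σ-related `j, k`; the map `σ ↦ D_γ(σ)` is an isomorphism from the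
lattice of achievable partitions (ordered by reverse refinement) onto these subspaces ordered
by reverse inclusion, and it turns joins into intersections. -/
theorem degenerate_strata_lattice {I A : Type*} [Fintype I] [Fintype A]
    (γ : I → A → Option I) :
    -- D_γ(σ) is cut out by the linear equations q^{j,a} = q^{k,a}:
    (∀ σ : Setoid I, Achievable γ σ →
      Dstratum γ σ =
        {q | IsParam γ q ∧ ∀ j k : I, σ j k → ∀ a : A, q j a = q k a}) ∧
    -- order isomorphism onto the subspaces ordered by reverse inclusion:
    (∀ σ σ' : Setoid I, Achievable γ σ → Achievable γ σ' →
      (Dstratum γ σ' ⊆ Dstratum γ σ ↔ σ ≤ σ')) ∧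
    -- joins are mapped to intersections:
    (∀ σ σ' : Setoid I, Achievable γ σ → Achievable γ σ' →
      Dstratum γ (σ ⊔ σ') = Dstratum γ σ ∩ Dstratum γ σ') := by
  have key : ∀ σ : Setoid I, Achievable γ σ →
      Dstratum γ σ =
        {q | IsParam γ q ∧ ∀ j k : I, σ j k → ∀ a : A, q j a = q k a} := by
    intro σ ⟨q₀, hq₀p, hq₀⟩
    ext q
    constructor
    · rintro ⟨hp, hle⟩
      refine ⟨hp, fun j k hjk a => ?_⟩
      have h := hle hjk
      have := h [a]
      rwa [wordProb_single γ q hp.2.1, wordProb_single γ q hp.2.1] at this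
    · rintro ⟨hp, heq⟩
      refine ⟨hp, fun j k hjk => ?_⟩
      have hbis : ∀ j k, σ j k → ∀ a : A,
          (γ j a = none ∧ γ k a = none) ∨
            ∃ j' k', γ j a = some j' ∧ γ k a = some k' ∧ σ j' k' := by
        intro j k hjk a
        have hjk' : (predSetoid γ q₀) j k := hq₀ ▸ hjk
        rcases bisim_step hq₀p hjk' a with h | ⟨j', k', hj, hk, hw⟩
        · exact Or.inl h
        · exact Or.inr ⟨j', k', hj, hk, hq₀ ▸ hw⟩
      exact fun w => pred_of_bisim hbis heq w j k hjk
  refine ⟨key, ?_, ?_⟩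
  · intro σ σ' hσ hσ'
    constructor
    · intro hsub
      obtain ⟨q', hq'p, hq'⟩ := hσ'
      have hmem : q' ∈ Dstratum γ σ' := ⟨hq'p, le_of_eq hq'.symm⟩
      have := (hsub hmem).2
      exact hq' ▸ this
    · intro hle
      rintro q ⟨hp, h⟩
      exact ⟨hp, le_trans hle h⟩
  · intro σ σ' _ _
    ext q
    constructor
    · rintro ⟨hp, h⟩
      exact ⟨⟨hp, le_trans le_sup_left h⟩, ⟨hp, le_trans le_sup_right h⟩⟩
    · rintro ⟨⟨hp, h1⟩, ⟨_, h2⟩⟩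
      exact ⟨hp, sup_le h1 h2⟩
end

section
/- Key inductive step of Proposition 3.3: let γ be a unifilar (deterministic) transition structure on finite state set I with alphabet A, σ a partition of I compatible with γ in the sense that for all a ∈ A, blocks s₁, s₂ ∈ σ, and j, j' ∈ s₁: γ(j,a) ∈ s₂ ⟺ γ(j',a) ∈ s₂. If a parameter point q satisfies q^{j,a} = q^{k,a} for all a and all j, k in the same block of σ, then for every finite word a_{1:L}, the word probability from state j equals the word probability from state k whenever j, k are in the same block of σ. -/
/-- Key inductive step of Proposition 3.3: if the partition `σ` is compatible with the
deterministic transition structure `γ` and the transition probabilities agree on σ-related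
states, then σ-related states assign the same probability to every finite word. -/
theorem wordProb_eq_of_partition_compatible {I A : Type*} [Fintype I] [Fintype A]
    (γ : I → A → Option I) (σ : Setoid I)
    (hcomp : ∀ (a : A) (j j' : I), σ j j' →
      (γ j a = none ∧ γ j' a = none) ∨
      ∃ k k', γ j a = some k ∧ γ j' a = some k' ∧ σ k k')
    (q : I → A → ℝ)
    (hq : ∀ (j k : I) (a : A), σ j k → q j a = q k a) :
    ∀ (w : List A) (j k : I), σ j k → wordProb γ q w j = wordProb γ q w k := by
  intro w
  induction w with
  | nil => intro j k _; rfl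
  | cons a w ih =>
    intro j k hjk
    rcases hcomp a j k hjk with ⟨h1, h2⟩ | ⟨m, m', h1, h2, hmm⟩
    · simp [wordProb, h1, h2]
    · simp [wordProb, h1, h2, hq j k a hjk, ih m m' hmm]
end
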